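/- Let A be a nonempty linear order, let a₀ ∈ A be any fixed element, and let (I u) for u : ℕ → A be a family of linear orders such that for all a, b ∈ A and every u, the order I (a::b::u) is order-isomorphic to I u. Setting X = Σₗ (u : A^ω), I u and J u = I (a₀::u), we have A ×ₗ X ≅ Σₗ (u : A^ω), J u. That is, multiplying X on the left by A replaces each fiber I u by the fiber attached to the shifted class [a₀::u]₂, interchanging the roles of I on the classes [u]₂ and [a₀::u]₂. -/

import Mathlib

/-!
Prepending an entry is an order isomorphism `A ×ₗ A^ω ≃o A^ω`, `(a, u) ↦ a::u`. Through it,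
`A ×ₗ Σₗ u, I u` becomes a lexicographic sum over `A^ω` whose fiber at `a::u` is `I u`, and
`I u ≅ I (a₀::a::u) = J (a::u)` by the hypothesis.
-/

/-- The sequence with first entry `a` followed by the entries of `u`. -/
def consSeq {α : Type*} (a : α) (u : ℕ → α) : ℕ → α
  | 0 => a
  | n + 1 => u n

section ConsSeq

variable {α : Type*}

theorem consSeq_head_tail (v : ℕ → α) : consSeq (v 0) (fun n => v (n + 1)) = v := by
  funext n
  cases n <;> rfl

theorem toLex_consSeq_lt_toLex_consSeq_iff [LinearOrder α] {a b : α} {u v : ℕ → α} :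
    toLex (consSeq a u) < toLex (consSeq b v) ↔ a < b ∨ a = b ∧ toLex u < toLex v := by
  constructor
  · rintro ⟨_ | n, heq, hlt⟩
    · exact Or.inl hlt
    · exact Or.inr ⟨heq 0 n.succ_pos, n, fun j hj => heq (j + 1) (Nat.succ_lt_succ hj), hlt⟩
  · rintro (hlt | ⟨rfl, n, heq, hlt⟩)
    · exact ⟨0, fun j hj => absurd hj j.not_lt_zero, hlt⟩
    · refine ⟨n + 1, fun j hj => ?_, hlt⟩
      cases j with
      | zero => rfl
      | succ j => exact heq j (Nat.lt_of_succ_lt_succ hj)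

variable (α) [LinearOrder α]

noncomputable def consSeqOrderIso : α ×ₗ Lex (ℕ → α) ≃o Lex (ℕ → α) :=
  StrictMono.orderIsoOfSurjective (fun p => toLex (consSeq (ofLex p).1 (ofLex (ofLex p).2)))
    (fun _ _ hpq => toLex_consSeq_lt_toLex_consSeq_iff.mpr (Prod.Lex.lt_iff.mp hpq))
    (fun v => ⟨toLex (ofLex v 0, toLex fun n => ofLex v (n + 1)),
      congrArg toLex (consSeq_head_tail (ofLex v))⟩)

end ConsSeq

noncomputable def OrderIso.prodLexSigmaLex {α ι κ : Type*} [LinearOrder α] [LinearOrder ι]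
    [LinearOrder κ] {β : ι → Type*} {γ : κ → Type*} [∀ i, LinearOrder (β i)]
    [∀ k, LinearOrder (γ k)] (c : α ×ₗ ι ≃o κ) (e : ∀ a i, β i ≃o γ (c (toLex (a, i)))) :
    α ×ₗ (Σₗ i, β i) ≃o Σₗ k, γ k :=
  StrictMono.orderIsoOfSurjective
    (fun p => toLex ⟨c (toLex ((ofLex p).1, (ofLex (ofLex p).2).1)),
      e (ofLex p).1 (ofLex (ofLex p).2).1 (ofLex (ofLex p).2).2⟩)
    (by
      rintro ⟨a, ⟨i, x⟩⟩ ⟨b, ⟨j, y⟩⟩ hlt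
      rcases Prod.Lex.lt_iff.mp hlt with hab | ⟨rfl, hlt⟩
      · exact Sigma.Lex.left _ _ (c.strictMono (Prod.Lex.toLex_lt_toLex.mpr (Or.inl hab)))
      · cases hlt with
        | left _ _ hij =>
          exact Sigma.Lex.left _ _ (c.strictMono (Prod.Lex.toLex_lt_toLex.mpr (Or.inr ⟨rfl, hij⟩)))
        | right _ _ hxy => exact Sigma.Lex.right _ _ ((e a i).strictMono hxy))
    (by
      rintro ⟨k, z⟩
      obtain ⟨⟨a, i⟩, rfl⟩ := c.surjective k
      exact ⟨toLex (a, toLex ⟨i, (e a i).symm z⟩),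
        congrArg toLex (Sigma.ext rfl (heq_of_eq ((e a i).apply_symm_apply z)))⟩)

theorem left_mul_shifts_fibers_general (A : Type*) [LinearOrder A] (a₀ : A)
    (I : (ℕ → A) → Type*) [∀ u, LinearOrder (I u)]
    (h : ∀ (a b : A) (u : ℕ → A), Nonempty (I (consSeq a (consSeq b u)) ≃o I u)) :
    Nonempty
      (Lex (A × Lex (Σ u : Lex (ℕ → A), I (ofLex u))) ≃o
        Lex (Σ u : Lex (ℕ → A), I (consSeq a₀ (ofLex u)))) :=
  ⟨OrderIso.prodLexSigmaLex (consSeqOrderIso A) fun a u => (h a₀ a (ofLex u)).some.symm⟩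

/-- Suppose the fibers `I u` are constant up to order isomorphism on
2-tail-equivalence classes (i.e. `I (a::b::u) ≅ I u` for all `a`, `b`, `u`),
and let `X = Σₗ (u : A^ω), I u`.  Then for any fixed `a₀ : A`, multiplying `X`
on the left by `A` replaces each fiber `I u` by the shifted fiber
`J u = I (a₀::u)`:  `A ×ₗ X ≅ Σₗ (u : A^ω), J u`. -/
theorem left_mul_shifts_fibers (A : Type*) [LinearOrder A] [Nonempty A] (a₀ : A)
    (I : (ℕ → A) → Type*) [∀ u, LinearOrder (I u)]
    (h : ∀ (a b : A) (u : ℕ → A), Nonempty (I (consSeq a (consSeq b u)) ≃o I u)) :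
    Nonempty
      (Lex (A × Lex (Σ u : Lex (ℕ → A), I (ofLex u))) ≃o
        Lex (Σ u : Lex (ℕ → A), I (consSeq a₀ (ofLex u)))) :=
  left_mul_shifts_fibers_general A a₀ I h
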